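/- arXiv:2312.04562 — 4 statements merged into one kernel-verified Lean document; each statement's English description precedes it below -/
import Mathlib

section
/- In the iterated Baumslag-Solitar group BS⁽²⁾ = ⟨a, b, c | a b = b a², b c = c b²⟩, for every natural number n the element v(n) := (c⁻ⁿ b⁻¹ cⁿ) a (c⁻ⁿ b cⁿ) equals a^(2^(2ⁿ)). -/
/-- The defining relations of the iterated Baumslag-Solitar group
BS⁽²⁾ = ⟨a, b, c | a b = b a², b c = c b²⟩, with generators indexed by `Fin 3`
(0 ↦ a, 1 ↦ b, 2 ↦ c). -/
def BS2Rels : Set (FreeGroup (Fin 3)) :=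
  {FreeGroup.of 0 * FreeGroup.of 1 *
      (FreeGroup.of 1 * FreeGroup.of 0 * FreeGroup.of 0)⁻¹,
   FreeGroup.of 1 * FreeGroup.of 2 *
      (FreeGroup.of 2 * FreeGroup.of 1 * FreeGroup.of 1)⁻¹}

/-- The iterated Baumslag-Solitar group BS⁽²⁾. -/
abbrev BS2 := PresentedGroup BS2Rels

/-!
Each relation says that conjugation by the next generator squares the previous one:
`b⁻¹ a b = a²` and `c⁻¹ b c = b²`. Iterating, `c⁻ⁿ b cⁿ = b^(2ⁿ)`, so `v(n)` is the conjugate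
of `a` by `b^(2ⁿ)`, which is `a^(2^(2ⁿ))` by iterating the first relation `2ⁿ` times.
-/

theorem inv_pow_mul_mul_pow_eq_pow_pow {G : Type*} [Group G] {x y : G} {k : ℕ}
    (h : y⁻¹ * x * y = x ^ k) (m : ℕ) : y⁻¹ ^ m * x * y ^ m = x ^ (k ^ m) := by
  induction m with
  | zero => simp
  | succ m ih =>
    have hym : (y⁻¹ ^ m)⁻¹ = y ^ m := by rw [inv_pow, inv_inv]
    calc y⁻¹ ^ (m + 1) * x * y ^ (m + 1) = y⁻¹ ^ m * (y⁻¹ * x * y) * (y⁻¹ ^ m)⁻¹ := by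
          rw [pow_succ, pow_succ', hym]; group
      _ = (y⁻¹ ^ m * x * (y⁻¹ ^ m)⁻¹) ^ k := by rw [h, conj_pow]
      _ = x ^ (k ^ (m + 1)) := by rw [hym, ih, ← pow_mul, pow_succ]

theorem inv_mul_mul_eq_sq_of_mul_eq {G : Type*} [Group G] {x y : G} (h : x * y = y * x * x) :
    y⁻¹ * x * y = x ^ 2 := by
  rw [mul_assoc, h, mul_assoc, inv_mul_cancel_left, sq]

namespace BS2

open PresentedGroup

theorem of_zero_mul_of_one : (of 0 : BS2) * of 1 = of 1 * of 0 * of 0 := by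
  have h := mk_eq_mk_of_mul_inv_mem (rels := BS2Rels) (Set.mem_insert _ _)
  simp only [map_mul] at h
  exact h

theorem of_one_mul_of_two : (of 1 : BS2) * of 2 = of 2 * of 1 * of 1 := by
  have h := mk_eq_mk_of_mul_inv_mem (rels := BS2Rels) (Set.mem_insert_of_mem _ rfl)
  simp only [map_mul] at h
  exact h

end BS2

theorem bs2_doubly_exponential (n : ℕ) :
    (((PresentedGroup.of 2 : BS2)⁻¹) ^ n * (PresentedGroup.of 1 : BS2)⁻¹ *
        (PresentedGroup.of 2 : BS2) ^ n) *
      (PresentedGroup.of 0 : BS2) *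
      (((PresentedGroup.of 2 : BS2)⁻¹) ^ n * (PresentedGroup.of 1 : BS2) *
        (PresentedGroup.of 2 : BS2) ^ n)
      = (PresentedGroup.of 0 : BS2) ^ (2 ^ (2 ^ n)) := by
  set a : BS2 := PresentedGroup.of 0
  set b : BS2 := PresentedGroup.of 1
  set c : BS2 := PresentedGroup.of 2
  have hb : c⁻¹ ^ n * b * c ^ n = b ^ 2 ^ n :=
    inv_pow_mul_mul_pow_eq_pow_pow (inv_mul_mul_eq_sq_of_mul_eq BS2.of_one_mul_of_two) n
  calc c⁻¹ ^ n * b⁻¹ * c ^ n * a * (c⁻¹ ^ n * b * c ^ n)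
      = (c⁻¹ ^ n * b * c ^ n)⁻¹ * a * (c⁻¹ ^ n * b * c ^ n) := by group
    _ = b⁻¹ ^ 2 ^ n * a * b ^ 2 ^ n := by rw [hb, inv_pow]
    _ = a ^ 2 ^ 2 ^ n :=
      inv_pow_mul_mul_pow_eq_pow_pow (inv_mul_mul_eq_sq_of_mul_eq BS2.of_zero_mul_of_one) _
end

section
/- The submonoid of GL(2, ℚ) generated by the two matrices B = [[1/2,0],[0,1]] and C = [[1/2,1],[0,1]] is free: distinct finite words in B and C yield distinct matrices. Consequently the number of distinct elements of BS(1,2) representable by words of length at most 2L in the generators is at least 2^L. -/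
/-- The defining relation of the Baumslag-Solitar group BS(1,2) = ⟨a, b | a b = b a²⟩. -/
def BSRels : Set (FreeGroup Bool) :=
  {FreeGroup.of true * FreeGroup.of false *
    (FreeGroup.of false * FreeGroup.of true * FreeGroup.of true)⁻¹}

/-- The Baumslag-Solitar group BS(1,2). -/
abbrev BS12 := PresentedGroup BSRels

/-- `a` generator of BS(1,2). -/
noncomputable def bsa : BS12 := PresentedGroup.of true
/-- `b` generator of BS(1,2). -/
noncomputable def bsb : BS12 := PresentedGroup.of false

/-- The two matrices B = [[1/2,0],[0,1]] and C = [[1/2,1],[0,1]], images of `b` and `a·b`. -/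
noncomputable def BCmat : Bool → Matrix (Fin 2) (Fin 2) ℚ :=
  fun x => if x then !![(1:ℚ)/2, 0; 0, 1] else !![(1:ℚ)/2, 1; 0, 1]

/-!
The representation sends `a ↦ [[1,1],[0,1]]` and `b ↦ [[1/2,0],[0,1]]`, so `B` and `C` are the
affine maps `t ↦ t/2` and `t ↦ t/2 + 1` of `ℚ`. A word `w` therefore acts as
`t ↦ t/2^|w| + offset w` with `offset w ∈ [0, 2)`, and its first letter is `C` exactly when
`offset w ≥ 1`: reading off letters one at a time recovers `w` from its matrix. Pulling this back
through the representation, the `2^L` words of length `L` in `b` and `a b` are distinct elements of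
BS(1,2), each a product of at most `2L` generators.
-/

open Matrix Function

def offset : List Bool → ℚ
  | [] => 0
  | x :: w => offset w / 2 + if x then 0 else 1

lemma offset_mem_Ico (w : List Bool) : offset w ∈ Set.Ico 0 2 := by
  induction w with
  | nil => simp [offset]
  | cons x w ih =>
    obtain ⟨h0, h2⟩ := ih
    cases x <;> simp only [offset, Set.mem_Ico] <;> constructor <;> norm_num <;> linarith

lemma prod_map_BCmat (w : List Bool) :
    (w.map BCmat).prod = !![(1 / 2 : ℚ) ^ w.length, offset w; 0, 1] := by
  induction w with
  | nil => simp [offset, one_fin_two]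
  | cons x w ih =>
    rw [List.map_cons, List.prod_cons, ih]
    cases x <;> simp [BCmat, offset, pow_succ] <;> constructor <;> ring

lemma eq_of_length_eq_of_offset_eq :
    ∀ {w w' : List Bool}, w.length = w'.length → offset w = offset w' → w = w'
  | [], [], _, _ => rfl
  | x :: w, y :: w', hlen, hoff => by
    obtain ⟨h0, h2⟩ := offset_mem_Ico w
    obtain ⟨h0', h2'⟩ := offset_mem_Ico w'
    have hxy : x = y := by
      cases x <;> cases y <;> simp only [offset] at hoff <;> norm_num at hoff ⊢ <;> linarith
    subst hxy
    have hrest : offset w = offset w' := by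
      simp only [offset] at hoff; linarith
    exact congrArg (x :: ·) (eq_of_length_eq_of_offset_eq (Nat.succ_injective hlen) hrest)

theorem prod_map_BCmat_injective : Injective fun w : List Bool => (w.map BCmat).prod := by
  intro w w' h
  simp only [prod_map_BCmat] at h
  have hpow : (1 / 2 : ℚ) ^ w.length = (1 / 2) ^ w'.length := congrFun₂ h 0 0
  exact eq_of_length_eq_of_offset_eq (pow_right_injective₀ (by norm_num) (by norm_num) hpow)
    (congrFun₂ h 0 1)

noncomputable def bsRepGen (x : Bool) : GL (Fin 2) ℚ :=
  if x then GeneralLinearGroup.mkOfDetNeZero !![1, 1; 0, 1] (by simp)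
  else GeneralLinearGroup.mkOfDetNeZero !![1 / 2, 0; 0, 1] (by simp)

noncomputable def bsRep : BS12 →* GL (Fin 2) ℚ :=
  PresentedGroup.toGroup (f := bsRepGen) <| by
    rintro r rfl
    simp only [map_mul, map_inv, FreeGroup.lift_apply_of, mul_inv_eq_one]
    ext : 1
    norm_num [bsRepGen]

noncomputable def bsMatrixRep : BS12 →* Matrix (Fin 2) (Fin 2) ℚ :=
  (Units.coeHom _).comp bsRep

lemma bsMatrixRep_bsa : bsMatrixRep bsa = !![1, 1; 0, 1] := by
  simp [bsMatrixRep, bsRep, bsRepGen, bsa, PresentedGroup.toGroup.of]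

lemma bsMatrixRep_bsb : bsMatrixRep bsb = !![1 / 2, 0; 0, 1] := by
  simp [bsMatrixRep, bsRep, bsRepGen, bsb, PresentedGroup.toGroup.of]

noncomputable def wordGen (x : Bool) : BS12 := if x then bsb else bsa * bsb

lemma bsMatrixRep_wordGen (x : Bool) : bsMatrixRep (wordGen x) = BCmat x := by
  cases x <;> simp [wordGen, BCmat, bsMatrixRep_bsa, bsMatrixRep_bsb]

lemma bsMatrixRep_prod_map_wordGen (w : List Bool) :
    bsMatrixRep (w.map wordGen).prod = (w.map BCmat).prod := by
  rw [map_list_prod, List.map_map]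
  exact congrArg List.prod (List.map_congr_left fun x _ => bsMatrixRep_wordGen x)

theorem prod_map_wordGen_injective : Injective fun w : List Bool => (w.map wordGen).prod := by
  intro w w' h
  apply prod_map_BCmat_injective
  simpa only [bsMatrixRep_prod_map_wordGen] using congrArg bsMatrixRep h

section WordBall

variable {M : Type*} [Monoid M] {S : Set M}

def wordBall (S : Set M) (n : ℕ) : Set M :=
  {g | ∃ l : List M, (∀ x ∈ l, x ∈ S) ∧ l.length ≤ n ∧ l.prod = g}

lemma wordBall_finite (hS : S.Finite) (n : ℕ) : (wordBall S n).Finite := by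
  have : Finite S := hS.to_subtype
  refine ((List.finite_length_le S n).image fun l => (l.map Subtype.val).prod).subset ?_
  rintro g ⟨l, hlS, hlen, rfl⟩
  lift l to List S using hlS
  exact ⟨l, by simpa using hlen, rfl⟩

lemma mul_mem_wordBall {m n : ℕ} {g h : M} (hg : g ∈ wordBall S m)
    (hh : h ∈ wordBall S n) : g * h ∈ wordBall S (m + n) := by
  obtain ⟨l, hlS, hl, rfl⟩ := hg
  obtain ⟨l', hlS', hl', rfl⟩ := hh
  refine ⟨l ++ l', ?_, by simp; omega, List.prod_append⟩
  simpa [or_imp, forall_and] using And.intro hlS hlS'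

lemma list_prod_mem_wordBall {k : ℕ} {l : List M}
    (hl : ∀ x ∈ l, x ∈ wordBall S k) : l.prod ∈ wordBall S (k * l.length) := by
  induction l with
  | nil => exact ⟨[], by simp⟩
  | cons x l ih =>
    simp only [List.forall_mem_cons] at hl
    rw [List.prod_cons, List.length_cons, mul_add_one, add_comm]
    exact mul_mem_wordBall hl.1 (ih hl.2)

end WordBall

lemma wordGen_mem_wordBall (x : Bool) : wordGen x ∈ wordBall {bsa, bsa⁻¹, bsb, bsb⁻¹} 2 := by
  cases x
  · exact ⟨[bsa, bsb], by simp, le_rfl, by simp [wordGen]⟩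
  · exact ⟨[bsb], by simp, by simp, by simp [wordGen]⟩

theorem bs12_free_submonoid_and_growth :
    (∀ w w' : List Bool, (w.map BCmat).prod = (w'.map BCmat).prod → w = w') ∧
    (∀ L : ℕ, 2 ^ L ≤
      Nat.card {g : BS12 | ∃ l : List BS12,
        (∀ x ∈ l, x ∈ ({bsa, bsa⁻¹, bsb, bsb⁻¹} : Set BS12)) ∧
        l.length ≤ 2 * L ∧ l.prod = g}) := by
  refine ⟨prod_map_BCmat_injective, fun L => ?_⟩
  set S : Set BS12 := {bsa, bsa⁻¹, bsb, bsb⁻¹}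
  have : Finite (wordBall S (2 * L)) := (wordBall_finite (Set.toFinite S) _).to_subtype
  let f (v : List.Vector Bool L) : wordBall S (2 * L) :=
    ⟨(v.toList.map wordGen).prod, by
      simpa [mul_comm] using list_prod_mem_wordBall (l := v.toList.map wordGen)
        (List.forall_mem_map.2 fun x _ => wordGen_mem_wordBall x)⟩
  have hf : Injective f := fun v v' h =>
    List.Vector.toList_injective (prod_map_wordGen_injective (congrArg Subtype.val h))
  calc 2 ^ L = Nat.card (List.Vector Bool L) := by simp
    _ ≤ Nat.card (wordBall S (2 * L)) := Nat.card_le_card_of_injective f hf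
end

section
/- In BS(1,2) with generating set {a, b}, for every m ≥ 1 the word length satisfies |aᵐ| ≥ log₂(m)/2. More precisely, if w is any word of length ℓ in {a,a⁻¹,b,b⁻¹} representing aᵐ under the matrix representation a ↦ [[1,1],[0,1]], b ↦ [[1/2,0],[0,1]], then m ≤ 4^ℓ. -/
/-- Word length of `g` with respect to the generators `{a, b}` and their inverses. -/
noncomputable def wordLength (g : BS12) : ℕ :=
  sInf {n : ℕ | ∃ l : List BS12,
    (∀ x ∈ l, x ∈ ({bsa, bsa⁻¹, bsb, bsb⁻¹} : Set BS12)) ∧ l.length = n ∧ l.prod = g}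

/-!
Let `a` act on `ℚ` by `x ↦ x + 1` and `b` by `x ↦ x / 2` (the affine maps given by the matrices
`[[1,1],[0,1]]` and `[[1/2,0],[0,1]]`); these satisfy `a b = b a²`, so BS(1,2) acts on `ℚ`.
Each generator and its inverse maps `x` to a point with `|·| + 1` at most `2 (|x| + 1)`, so a
word of length `ℓ` moves `0` to a point of absolute value less than `2 ^ ℓ`. Since `aᵐ` moves
`0` to `m`, any word for `aᵐ` has `m < 2 ^ ℓ ≤ 4 ^ ℓ`.
-/

theorem List.prod_smul_le_pow_length_mul {M α : Type*} [Monoid M] [MulAction M α]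
    (f : α → ℝ) {c : ℝ} (hc : 0 ≤ c) {l : List M} (hl : ∀ g ∈ l, ∀ x, f (g • x) ≤ c * f x)
    (x : α) : f (l.prod • x) ≤ c ^ l.length * f x := by
  induction l with
  | nil => simp
  | cons g l ih =>
    have hl' := ih fun h hh => hl h (List.mem_cons_of_mem g hh)
    calc f ((g :: l).prod • x) = f (g • l.prod • x) := by rw [List.prod_cons, mul_smul]
      _ ≤ c * f (l.prod • x) := hl g List.mem_cons_self _
      _ ≤ c * (c ^ l.length * f x) := mul_le_mul_of_nonneg_left hl' hc
      _ = c ^ (g :: l).length * f x := by rw [List.length_cons, pow_succ']; ring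

abbrev bsGenerators : Set BS12 := {bsa, bsa⁻¹, bsb, bsb⁻¹}

noncomputable def affineA : Equiv.Perm ℚ := Equiv.addRight 1

noncomputable def affineB : Equiv.Perm ℚ := Equiv.mulLeft₀ 2⁻¹ (by norm_num)

@[simp] lemma affineA_apply (x : ℚ) : affineA x = x + 1 := rfl

@[simp] lemma affineA_inv_apply (x : ℚ) : affineA⁻¹ x = x - 1 := by
  simp [affineA, sub_eq_add_neg]

@[simp] lemma affineB_apply (x : ℚ) : affineB x = 2⁻¹ * x := rfl

@[simp] lemma affineB_inv_apply (x : ℚ) : affineB⁻¹ x = 2 * x := by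
  simp [affineB, Equiv.Perm.inv_def]

lemma affineA_mul_affineB : affineA * affineB = affineB * affineA * affineA := by
  ext x; simp only [Equiv.Perm.mul_apply, affineA_apply, affineB_apply]; ring

lemma lift_affine_eq_one_of_mem_bsRels :
    ∀ r ∈ BSRels, FreeGroup.lift (fun x : Bool => if x then affineA else affineB) r = 1 := by
  rintro r rfl
  simp only [map_mul, map_inv, FreeGroup.lift_apply_of, Bool.false_eq_true, if_true, if_false,
    affineA_mul_affineB, mul_inv_cancel]

noncomputable def toAffine : BS12 →* Equiv.Perm ℚ :=
  PresentedGroup.toGroup lift_affine_eq_one_of_mem_bsRels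

lemma toAffine_bsa : toAffine bsa = affineA := PresentedGroup.toGroup.of _

lemma toAffine_bsb : toAffine bsb = affineB := PresentedGroup.toGroup.of _

lemma toAffine_bsa_pow_apply_zero (m : ℕ) : toAffine (bsa ^ m) 0 = m := by
  induction m with
  | zero => simp
  | succ n ih => rw [pow_succ', map_mul, Equiv.Perm.mul_apply, ih, toAffine_bsa]; simp

lemma abs_toAffine_apply_add_one_le {g : BS12} (hg : g ∈ bsGenerators)
    (x : ℚ) : |toAffine g x| + 1 ≤ 2 * (|x| + 1) := by
  have hx := abs_nonneg x
  rcases hg with rfl | rfl | rfl | rfl <;>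
    simp only [map_inv, toAffine_bsa, toAffine_bsb, affineA_apply, affineA_inv_apply,
      affineB_apply, affineB_inv_apply, abs_mul, abs_two, abs_inv]
  · linarith [abs_add_le x 1, abs_one (α := ℚ)]
  · linarith [abs_sub x 1, abs_one (α := ℚ)]
  · linarith
  · linarith

lemma lt_two_pow_length_of_prod_eq_bsa_pow {m : ℕ} {l : List BS12}
    (hl : ∀ x ∈ l, x ∈ bsGenerators) (hprod : l.prod = bsa ^ m) :
    m < 2 ^ l.length := by
  have hbound := List.prod_smul_le_pow_length_mul (fun x : ℚ => (|x| + 1 : ℝ)) zero_le_two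
    (l := l.map toAffine)
    (List.forall_mem_map.2 fun g hg x => by
      exact_mod_cast abs_toAffine_apply_add_one_le (hl g hg) x) 0
  rw [← map_list_prod, hprod, Equiv.Perm.smul_def, toAffine_bsa_pow_apply_zero] at hbound
  simp only [Rat.cast_zero, abs_zero, zero_add, mul_one, List.length_map, Nat.abs_cast]
    at hbound
  exact_mod_cast (lt_add_one _).trans_le hbound

lemma exists_list_length_eq_wordLength {g : BS12} {l : List BS12}
    (hl : ∀ x ∈ l, x ∈ bsGenerators) (hprod : l.prod = g) :
    ∃ l' : List BS12, (∀ x ∈ l', x ∈ bsGenerators) ∧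
      l'.length = wordLength g ∧ l'.prod = g :=
  Nat.sInf_mem (s := {n | ∃ l' : List BS12, (∀ x ∈ l', x ∈ bsGenerators) ∧ l'.length = n ∧
    l'.prod = g}) ⟨l.length, l, hl, rfl, hprod⟩

theorem bs12_wordLength_pow_a_lower_bound (m : ℕ) (hm : 1 ≤ m) :
    (∀ l : List BS12,
      (∀ x ∈ l, x ∈ ({bsa, bsa⁻¹, bsb, bsb⁻¹} : Set BS12)) → l.prod = bsa ^ m →
        m ≤ 4 ^ l.length) ∧
    Real.logb 2 m / 2 ≤ (wordLength (bsa ^ m) : ℝ) := by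
  have hword (l : List BS12) (hl : ∀ x ∈ l, x ∈ bsGenerators)
      (hprod : l.prod = bsa ^ m) : m ≤ 4 ^ l.length :=
    (lt_two_pow_length_of_prod_eq_bsa_pow hl hprod).le.trans
      (Nat.pow_le_pow_left (by norm_num) _)
  refine ⟨hword, ?_⟩
  obtain ⟨l, hl, hlen, hprod⟩ := exists_list_length_eq_wordLength (l := List.replicate m bsa)
    (fun x hx => by simp [List.eq_of_mem_replicate hx]) (List.prod_replicate m bsa)
  have hm4 : (m : ℝ) ≤ (2 : ℝ) ^ (2 * wordLength (bsa ^ m) : ℝ) :=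
    calc (m : ℝ) ≤ (4 : ℝ) ^ l.length := by exact_mod_cast hword l hl hprod
      _ = (2 : ℝ) ^ (2 * wordLength (bsa ^ m) : ℝ) := by
        rw [← hlen, Real.rpow_mul zero_le_two]; norm_num
  have hlog := (Real.logb_le_iff_le_rpow one_lt_two (by exact_mod_cast hm)).2 hm4
  linarith
end

section
/- Let H be a self-adjoint operator on a finite-dimensional Hilbert space and let |w⟩, |w'⟩ be unit vectors with ⟨w'| H^k |w⟩ = 0 for all 0 ≤ k < d. Then for all t ≥ 0, |⟨w'| exp(-i t H) |w⟩| ≤ (t ‖H‖)^d / d! · exp(t ‖H‖), where ‖H‖ is the operator norm. -/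
/-!
Expand `⟪w', exp (-i t H) w⟫ = ∑ₖ (-i t)ᵏ ⟪w', Hᵏ w⟫ / k!`. The terms with `k < d` vanish and the
`k`-th term is at most `xᵏ / k!` with `x = t ‖H‖`; since `d! i! ≤ (d + i)!`, the tail is dominated
termwise by `x^d / d! · xⁱ / i!`, which sums to `x^d / d! · eˣ`.
-/

open scoped Nat

lemma pow_add_div_factorial_le {x : ℝ} (hx : 0 ≤ x) (d i : ℕ) :
    x ^ (d + i) / (d + i)! ≤ x ^ d / d ! * (x ^ i / i !) := by
  have hfac : (d ! * i ! : ℝ) ≤ (d + i)! := by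
    exact_mod_cast Nat.le_of_dvd (Nat.factorial_pos _)
      (Nat.factorial_mul_factorial_dvd_factorial_add d i)
  calc x ^ (d + i) / (d + i)! ≤ x ^ (d + i) / (d ! * i !) := by gcongr
    _ = x ^ d / d ! * (x ^ i / i !) := by rw [pow_add]; field_simp

lemma HasSum.norm_le_pow_div_factorial_mul_exp {E : Type*} [SeminormedAddCommGroup E]
    {g : ℕ → E} {s : E} (hs : HasSum g s) {d : ℕ} (hg : ∀ k < d, g k = 0) {x : ℝ} (hx : 0 ≤ x)
    (hgx : ∀ k, ‖g k‖ ≤ x ^ k / k !) :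
    ‖s‖ ≤ x ^ d / d ! * Real.exp x := by
  have htail : HasSum (fun i => g (i + d)) s := by
    simpa [Finset.sum_eq_zero fun k hk => hg k (Finset.mem_range.mp hk)] using
      (hasSum_nat_add_iff' d).mpr hs
  have hexp : HasSum (fun i => x ^ i / i !) (Real.exp x) := by
    simpa [Real.exp_eq_exp_ℝ] using NormedSpace.expSeries_div_hasSum_exp x
  refine htail.norm_le_of_bounded (hexp.mul_left (x ^ d / d !)) fun i => ?_
  rw [add_comm i d]
  exact (hgx _).trans (pow_add_div_factorial_le hx d i)

lemma ContinuousLinearMap.norm_pow_apply_le {𝕜 E : Type*} [NontriviallyNormedField 𝕜]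
    [SeminormedAddCommGroup E] [NormedSpace 𝕜 E] (A : E →L[𝕜] E) (w : E) (k : ℕ) :
    ‖(A ^ k) w‖ ≤ ‖A‖ ^ k * ‖w‖ := by
  induction k with
  | zero => simp
  | succ k ih =>
    calc ‖(A ^ (k + 1)) w‖ = ‖A ((A ^ k) w)‖ := by rw [pow_succ']; rfl
      _ ≤ ‖A‖ * ‖(A ^ k) w‖ := A.le_opNorm _
      _ ≤ ‖A‖ ^ (k + 1) * ‖w‖ := by rw [pow_succ', mul_assoc]; gcongr

lemma hasSum_inner_exp_apply {𝕜 E : Type*} [RCLike 𝕜] [NormedAddCommGroup E]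
    [InnerProductSpace 𝕜 E] [CompleteSpace E] (A : E →L[𝕜] E) (v w : E) :
    HasSum (fun k => (k ! : 𝕜)⁻¹ * inner 𝕜 v ((A ^ k) w)) (inner 𝕜 v (NormedSpace.exp A w)) := by
  simpa [inner_smul_right] using
    (NormedSpace.exp_series_hasSum_exp' (𝕂 := 𝕜) A).mapL
      ((innerSL 𝕜 v).comp (ContinuousLinearMap.apply 𝕜 E w))

theorem matrix_element_exp_bound_general {n : ℕ}
    (H : EuclideanSpace ℂ (Fin n) →L[ℂ] EuclideanSpace ℂ (Fin n))
    (w w' : EuclideanSpace ℂ (Fin n)) (hw : ‖w‖ = 1) (hw' : ‖w'‖ = 1)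
    (d : ℕ) (hmat : ∀ k < d, (inner ℂ w' ((H ^ k) w) : ℂ) = 0)
    (t : ℝ) (ht : 0 ≤ t) :
    ‖(inner ℂ w' ((NormedSpace.exp ((-(Complex.I * (t : ℂ))) • H)) w) : ℂ)‖ ≤
      (t * ‖H‖) ^ d / (Nat.factorial d : ℝ) * Real.exp (t * ‖H‖) := by
  set c : ℂ := -(Complex.I * t)
  have hA : ‖c • H‖ = t * ‖H‖ := by simp [c, norm_smul, abs_of_nonneg ht]
  refine (hasSum_inner_exp_apply (c • H) w' w).norm_le_pow_div_factorial_mul_exp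
    (fun k hk => ?_) (by positivity) (fun k => ?_)
  · rw [smul_pow, smul_apply, inner_smul_right, hmat k hk, mul_zero, mul_zero]
  · calc ‖(k ! : ℂ)⁻¹ * inner ℂ w' (((c • H) ^ k) w)‖
        ≤ (k ! : ℝ)⁻¹ * (‖w'‖ * (‖c • H‖ ^ k * ‖w‖)) := by
          rw [norm_mul, norm_inv, Complex.norm_natCast]
          gcongr
          exact (norm_inner_le_norm _ _).trans (by gcongr; exact (c • H).norm_pow_apply_le w k)
      _ = (t * ‖H‖) ^ k / k ! := by rw [hw, hw', hA]; ring

theorem matrix_element_exp_bound {n : ℕ}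
    (H : EuclideanSpace ℂ (Fin n) →L[ℂ] EuclideanSpace ℂ (Fin n))
    (hH : IsSelfAdjoint H)
    (w w' : EuclideanSpace ℂ (Fin n)) (hw : ‖w‖ = 1) (hw' : ‖w'‖ = 1)
    (d : ℕ) (hmat : ∀ k < d, (inner ℂ w' ((H ^ k) w) : ℂ) = 0)
    (t : ℝ) (ht : 0 ≤ t) :
    ‖(inner ℂ w' ((NormedSpace.exp ((-(Complex.I * (t : ℂ))) • H)) w) : ℂ)‖ ≤
      (t * ‖H‖) ^ d / (Nat.factorial d : ℝ) * Real.exp (t * ‖H‖) :=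
  matrix_element_exp_bound_general H w w' hw hw' d hmat t ht
end
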